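/- For every κ > 0, the index Λ(κ) has the same sign as Γ(κ): Λ(κ) > 0 if and only if Γ(κ) > 0, and Λ(κ) < 0 if and only if Γ(κ) < 0. -/

import Mathlib

/-- The Whitham dispersion symbol `α(ξ) = √(tanh ξ / ξ)` for `ξ ≠ 0`, with `α(0) = 1`. -/
noncomputable def whithamSymbol (ξ : ℝ) : ℝ :=
  if ξ = 0 then 1 else Real.sqrt (Real.tanh ξ / ξ)


/-- The modulational instability index `Γ(κ) = 3α(κ) − 2α(2κ) − 1 + κ·α'(κ)`. -/
noncomputable def modulationalIndex (z : ℝ) : ℝ :=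
  3 * whithamSymbol z - 2 * whithamSymbol (2 * z) - 1 + z * deriv whithamSymbol z

/-- The index
`Λ(κ) = 2(2κα'(κ) + κ²α''(κ))(α(κ) − 1 + κα'(κ))³(3α(κ) − 2α(2κ) − 1 + κα'(κ))/(α(κ) − α(2κ))`. -/
noncomputable def LambdaIndex (κ : ℝ) : ℝ :=
  2 * (2 * κ * deriv whithamSymbol κ + κ ^ 2 * deriv (deriv whithamSymbol) κ) *
    (whithamSymbol κ - 1 + κ * deriv whithamSymbol κ) ^ 3 *
    (3 * whithamSymbol κ - 2 * whithamSymbol (2 * κ) - 1 + κ * deriv whithamSymbol κ) /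
    (whithamSymbol κ - whithamSymbol (2 * κ))


open Real

lemma tanh_hasDerivAt (x : ℝ) : HasDerivAt Real.tanh (1 - Real.tanh x ^ 2) x := by
  have hc : Real.cosh x ≠ 0 := (Real.cosh_pos x).ne'
  have h : HasDerivAt (fun y => Real.sinh y / Real.cosh y)
      ((Real.cosh x * Real.cosh x - Real.sinh x * Real.sinh x) / Real.cosh x ^ 2) x :=
    (Real.hasDerivAt_sinh x).div (Real.hasDerivAt_cosh x) hc
  have heq : Real.tanh = fun y => Real.sinh y / Real.cosh y :=
    funext fun y => Real.tanh_eq_sinh_div_cosh y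
  rw [heq]
  convert h using 1
  have h1 := Real.cosh_sq_sub_sinh_sq x
  field_simp

lemma tanh_pos' {x : ℝ} (hx : 0 < x) : 0 < Real.tanh x := by
  rw [Real.tanh_eq_sinh_div_cosh]
  exact div_pos (by rwa [Real.sinh_pos_iff]) (Real.cosh_pos x)

lemma tanh_lt_one' (x : ℝ) : Real.tanh x < 1 := by
  rw [Real.tanh_eq_sinh_div_cosh]
  rw [div_lt_one (Real.cosh_pos x)]
  nlinarith [Real.cosh_sq_sub_sinh_sq x, Real.cosh_pos x]

/-- `W x = √(x tanh x)`. -/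
noncomputable def whW (x : ℝ) : ℝ := Real.sqrt (x * Real.tanh x)

/-- first derivative of `W` on `(0,∞)`. -/
noncomputable def whWd (x : ℝ) : ℝ :=
  (1 * Real.tanh x + x * (1 - Real.tanh x ^ 2)) / (2 * whW x)

/-- second derivative of `W` on `(0,∞)`. -/
noncomputable def whWdd (x : ℝ) : ℝ :=
  ((2 * (1 - Real.tanh x ^ 2) * (1 - x * Real.tanh x)) * (2 * whW x)
    - (1 * Real.tanh x + x * (1 - Real.tanh x ^ 2)) * (2 * whWd x)) / (2 * whW x) ^ 2

lemma whW_pos {x : ℝ} (hx : 0 < x) : 0 < whW x :=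
  Real.sqrt_pos.2 (mul_pos hx (tanh_pos' hx))

lemma whW_sq {x : ℝ} (hx : 0 < x) : whW x ^ 2 = x * Real.tanh x :=
  Real.sq_sqrt (le_of_lt (mul_pos hx (tanh_pos' hx)))

lemma whW_hasDerivAt {x : ℝ} (hx : 0 < x) : HasDerivAt whW (whWd x) x := by
  have hm : HasDerivAt (fun y => y * Real.tanh y)
      (1 * Real.tanh x + x * (1 - Real.tanh x ^ 2)) x :=
    (hasDerivAt_id x).mul (tanh_hasDerivAt x)
  have hne : x * Real.tanh x ≠ 0 := (mul_pos hx (tanh_pos' hx)).ne'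
  exact hm.sqrt hne

lemma whWd_hasDerivAt {x : ℝ} (hx : 0 < x) : HasDerivAt whWd (whWdd x) x := by
  have ht := tanh_hasDerivAt x
  have hnum : HasDerivAt (fun y => 1 * Real.tanh y + y * (1 - Real.tanh y ^ 2))
      (2 * (1 - Real.tanh x ^ 2) * (1 - x * Real.tanh x)) x := by
    have h1 : HasDerivAt (fun y => (1:ℝ) * Real.tanh y) (1 * (1 - Real.tanh x ^ 2)) x :=
      ht.const_mul 1
    have h2 : HasDerivAt (fun y => (1:ℝ) - Real.tanh y ^ 2)
        (0 - 2 * Real.tanh x ^ (2-1) * (1 - Real.tanh x ^ 2)) x :=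
      (hasDerivAt_const x (1:ℝ)).sub (ht.pow 2)
    have h3 := (hasDerivAt_id x).mul h2
    have : HasDerivAt (fun y => 1 * Real.tanh y + y * (1 - Real.tanh y ^ 2)) _ x := h1.add h3
    convert this using 1
    simp only [id_eq]
    ring
  have hden : HasDerivAt (fun y => 2 * whW y) (2 * whWd x) x :=
    (whW_hasDerivAt hx).const_mul 2
  have hWne : 2 * whW x ≠ 0 := mul_ne_zero two_ne_zero (whW_pos hx).ne'
  have := hnum.div hden hWne
  exact this

lemma whithamSymbol_eq_W_div {x : ℝ} (hx : 0 < x) :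
    (if x = 0 then (1:ℝ) else Real.sqrt (Real.tanh x / x)) = whW x / x := by
  rw [if_neg hx.ne']
  unfold whW
  have h1 : Real.tanh x / x = (x * Real.tanh x) / x ^ 2 := by
    field_simp
  rw [h1, Real.sqrt_div (mul_pos hx (tanh_pos' hx)).le, Real.sqrt_sq hx.le]


noncomputable def whD (x : ℝ) : ℝ := (whWd x * x - whW x) / x ^ 2

noncomputable def whE (x : ℝ) : ℝ :=
  ((whWdd x * x + whWd x * 1 - whWd x) * x ^ 2 - (whWd x * x - whW x) * (2 * x ^ 1)) /
    (x ^ 2) ^ 2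

lemma whitham_hasDerivAt {x : ℝ} (hx : 0 < x) : HasDerivAt whithamSymbol (whD x) x := by
  have h0 : HasDerivAt (fun y => whW y / y)
      ((whWd x * x - whW x * 1) / x ^ 2) x :=
    (whW_hasDerivAt hx).div (hasDerivAt_id x) hx.ne'
  have h1 : HasDerivAt (fun y => whW y / y) (whD x) x := by
    convert h0 using 1; unfold whD; ring
  refine h1.congr_of_eventuallyEq ?_
  filter_upwards [Ioi_mem_nhds hx] with y hy
  exact whithamSymbol_eq_W_div hy

lemma deriv_whitham {x : ℝ} (hx : 0 < x) : deriv whithamSymbol x = whD x :=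
  (whitham_hasDerivAt hx).deriv

lemma whD_hasDerivAt {x : ℝ} (hx : 0 < x) : HasDerivAt whD (whE x) x := by
  have hnum : HasDerivAt (fun y => whWd y * y - whW y)
      (whWdd x * x + whWd x * 1 - whWd x) x :=
    ((whWd_hasDerivAt hx).mul (hasDerivAt_id x)).sub (whW_hasDerivAt hx)
  have hden : HasDerivAt (fun y : ℝ => y ^ 2) ((2:ℝ) * x ^ 1) x := by
    simpa using hasDerivAt_pow 2 x
  have h := hnum.div hden (by positivity : x ^ 2 ≠ 0)
  exact h

lemma deriv2_whitham {x : ℝ} (hx : 0 < x) :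
    deriv (deriv whithamSymbol) x = whE x := by
  have h : deriv whithamSymbol =ᶠ[nhds x] whD := by
    filter_upwards [Ioi_mem_nhds hx] with y hy
    exact deriv_whitham hy
  rw [Filter.EventuallyEq.deriv_eq h]
  exact (whD_hasDerivAt hx).deriv

lemma key1 {x : ℝ} (hx : 0 < x) :
    (1 * Real.tanh x + x * (1 - Real.tanh x ^ 2)) ^ 2 < 4 * (x * Real.tanh x) := by
  set y := Real.exp (2 * x) with hy
  have hy1 : 1 < y := Real.one_lt_exp_iff.2 (by linarith)
  have ht : Real.tanh x = (y - 1) / (y + 1) := by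
    rw [Real.tanh_eq_sinh_div_cosh, Real.sinh_eq, Real.cosh_eq, hy]
    have hE : Real.exp (2 * x) = Real.exp x * Real.exp x := by rw [two_mul, Real.exp_add]
    have h0 : (0:ℝ) < Real.exp x := Real.exp_pos x
    rw [hE, Real.exp_neg]
    field_simp
  have hy4 : y ^ 2 = Real.exp (4 * x) := by
    rw [hy, sq, ← Real.exp_add, show 2 * x + 2 * x = 4 * x by ring]
  have hP1 : 1 + 4 * x < y ^ 2 := by
    have := Real.add_one_lt_exp (show (4:ℝ) * x ≠ 0 by positivity)
    rw [hy4]; linarith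
  have hP2 : (1 - 4 * x) * y ^ 2 < 1 := by
    have h := Real.add_one_lt_exp (show -(4 * x) ≠ 0 by simp [hx.ne'])
    have hinv : Real.exp (-(4 * x)) = 1 / y ^ 2 := by
      rw [Real.exp_neg, hy4, one_div]
    rw [hinv] at h
    have hy2 : (0:ℝ) < y ^ 2 := by positivity
    rw [lt_div_iff₀ hy2] at h
    linarith
  rw [ht]
  have hyp : (0:ℝ) < y + 1 := by linarith
  have hid : 4 * (x * ((y - 1) / (y + 1)))
      - (1 * ((y - 1) / (y + 1)) + x * (1 - ((y - 1) / (y + 1)) ^ 2)) ^ 2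
      = ((y ^ 2 - 1 - 4 * x) * (4 * x * y ^ 2 - (y ^ 2 - 1))) / (y + 1) ^ 4 := by
    field_simp
    ring
  have h9 : 0 < ((y ^ 2 - 1 - 4 * x) * (4 * x * y ^ 2 - (y ^ 2 - 1))) / (y + 1) ^ 4 :=
    div_pos (mul_pos (by linarith) (by nlinarith)) (by positivity)
  linarith [hid, h9]

lemma whWd_lt_one {x : ℝ} (hx : 0 < x) : whWd x < 1 := by
  have hWpos := whW_pos hx
  have htp := tanh_pos' hx
  have ht1 := tanh_lt_one' x
  have hs : 0 < 1 - Real.tanh x ^ 2 := by nlinarith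
  have hnum : 0 < 1 * Real.tanh x + x * (1 - Real.tanh x ^ 2) := by
    nlinarith [mul_pos hx hs]
  have hk := key1 hx
  have hWsq := whW_sq hx
  unfold whWd
  rw [div_lt_one (by positivity)]
  nlinarith [hk, hWsq, hWpos, hnum]

lemma whWdd_neg {x : ℝ} (hx : 0 < x) : whWdd x < 0 := by
  have hWpos := whW_pos hx
  have htp := tanh_pos' hx
  have ht1 := tanh_lt_one' x
  have hWsq := whW_sq hx
  have hs : 0 < 1 - Real.tanh x ^ 2 := by nlinarith
  unfold whWdd whWd
  apply div_neg_of_neg_of_pos _ (by positivity)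
  have hrw : 2 * (1 - Real.tanh x ^ 2) * (1 - x * Real.tanh x) * (2 * whW x) -
      (1 * Real.tanh x + x * (1 - Real.tanh x ^ 2)) *
      (2 * ((1 * Real.tanh x + x * (1 - Real.tanh x ^ 2)) / (2 * whW x)))
      = (2 * (2 * (1 - Real.tanh x ^ 2) * (1 - x * Real.tanh x)) * whW x ^ 2
        - (1 * Real.tanh x + x * (1 - Real.tanh x ^ 2)) ^ 2) / whW x := by
    field_simp
  rw [hrw]
  apply div_neg_of_neg_of_pos _ hWpos
  rw [hWsq]
  have h4 : 0 < 4 * x ^ 2 * Real.tanh x ^ 2 * (1 - Real.tanh x ^ 2) := by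
    have : (0:ℝ) < 4 * x ^ 2 * Real.tanh x ^ 2 := by positivity
    exact mul_pos this hs
  nlinarith [sq_nonneg (Real.tanh x - x * (1 - Real.tanh x ^ 2)), h4]

lemma whitham_sub_pos {x : ℝ} (hx : 0 < x) :
    0 < whithamSymbol x - whithamSymbol (2 * x) := by
  have h2x : 0 < 2 * x := by linarith
  have htanh2 : Real.tanh (2 * x) < 2 * Real.tanh x := by
    rw [Real.tanh_eq_sinh_div_cosh, Real.tanh_eq_sinh_div_cosh,
      Real.sinh_two_mul, Real.cosh_two_mul]
    rw [show 2 * (Real.sinh x / Real.cosh x) = 2 * Real.sinh x / Real.cosh x by ring]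
    rw [div_lt_div_iff₀ (by positivity) (Real.cosh_pos x)]
    have hsp : 0 < Real.sinh x := Real.sinh_pos_iff.2 hx
    nlinarith [mul_pos hsp (mul_pos hsp hsp)]
  have hlt : Real.tanh (2 * x) / (2 * x) < Real.tanh x / x := by
    rw [div_lt_div_iff₀ h2x hx]
    nlinarith [htanh2]
  unfold whithamSymbol
  rw [if_neg hx.ne', if_neg h2x.ne']
  have := Real.sqrt_lt_sqrt (div_nonneg (tanh_pos' h2x).le h2x.le) hlt
  linarith

theorem LambdaIndex_sign_eq_modulationalIndex_sign (κ : ℝ) (hκ : 0 < κ) :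
    (0 < LambdaIndex κ ↔ 0 < modulationalIndex κ) ∧
    (LambdaIndex κ < 0 ↔ modulationalIndex κ < 0) := by
  have hD : deriv whithamSymbol κ = whD κ := deriv_whitham hκ
  have hE : deriv (deriv whithamSymbol) κ = whE κ := deriv2_whitham hκ
  have hA : whithamSymbol κ = whW κ / κ := whithamSymbol_eq_W_div hκ
  have hWpos := whW_pos hκ
  -- fact 1 : α - 1 + κ α' = Wd - 1 < 0
  have hfact1 : whithamSymbol κ - 1 + κ * deriv whithamSymbol κ = whWd κ - 1 := by
    rw [hA, hD]; unfold whD; field_simp; ring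
  have hneg1 : whithamSymbol κ - 1 + κ * deriv whithamSymbol κ < 0 := by
    rw [hfact1]; linarith [whWd_lt_one hκ]
  -- fact 2 : 2κ α' + κ² α'' = κ * W'' < 0
  have hfact2 : 2 * κ * deriv whithamSymbol κ + κ ^ 2 * deriv (deriv whithamSymbol) κ
      = κ * whWdd κ := by
    rw [hD, hE]; unfold whD whE; field_simp; ring
  have hneg2 : 2 * κ * deriv whithamSymbol κ + κ ^ 2 * deriv (deriv whithamSymbol) κ < 0 := by
    rw [hfact2]
    exact mul_neg_of_pos_of_neg hκ (whWdd_neg hκ)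
  have hAB : 0 < whithamSymbol κ - whithamSymbol (2 * κ) := whitham_sub_pos hκ
  -- positive prefactor
  have hP : 0 < 2 * (2 * κ * deriv whithamSymbol κ + κ ^ 2 * deriv (deriv whithamSymbol) κ) *
      (whithamSymbol κ - 1 + κ * deriv whithamSymbol κ) ^ 3 /
      (whithamSymbol κ - whithamSymbol (2 * κ)) := by
    apply div_pos _ hAB
    have hcube : (whithamSymbol κ - 1 + κ * deriv whithamSymbol κ) ^ 3 < 0 :=
      Odd.pow_neg ⟨1, by norm_num⟩ hneg1
    have h2 : 2 * (2 * κ * deriv whithamSymbol κ + κ ^ 2 * deriv (deriv whithamSymbol) κ) < 0 :=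
      by linarith
    exact mul_pos_of_neg_of_neg h2 hcube
  have hLam : LambdaIndex κ =
      (2 * (2 * κ * deriv whithamSymbol κ + κ ^ 2 * deriv (deriv whithamSymbol) κ) *
        (whithamSymbol κ - 1 + κ * deriv whithamSymbol κ) ^ 3 /
        (whithamSymbol κ - whithamSymbol (2 * κ))) * modulationalIndex κ := by
    unfold LambdaIndex modulationalIndex
    ring
  rw [hLam]
  set P := 2 * (2 * κ * deriv whithamSymbol κ + κ ^ 2 * deriv (deriv whithamSymbol) κ) *
      (whithamSymbol κ - 1 + κ * deriv whithamSymbol κ) ^ 3 /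
      (whithamSymbol κ - whithamSymbol (2 * κ)) with hPdef
  constructor
  · constructor
    · intro h
      rcases mul_pos_iff.1 h with ⟨_, h2⟩ | ⟨h1, _⟩
      · exact h2
      · exact absurd hP (not_lt.2 h1.le)
    · intro h; exact mul_pos hP h
  · constructor
    · intro h
      rcases mul_neg_iff.1 h with ⟨_, h2⟩ | ⟨h1, _⟩
      · exact h2
      · exact absurd hP (not_lt.2 h1.le)
    · intro h; exact mul_neg_of_pos_of_neg hP h
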